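/- If K is an n-dimensional convex body with smooth boundary which is not of constant width, then K can be written as a union of n subsets, each of diameter strictly smaller than the diameter of K. -/

import Mathlib

/-!
Let `v` be a unit direction in which the width of `K` is smaller than its diameter `D`; then no
diameter of `K` is parallel to `v`. A diameter `[x, y]` is normal to `K` at `y` (the ball of
radius `D` about `x` contains `K`), so by smoothness every point is the endpoint of at most one
diameter. Split the directions into `n` closed cones `C j`, according to which of `n` vectors
spanning `v^⊥` has the largest inner product; a cone contains two opposite directions only on
the line `ℝ v`. Hence the endpoints `y` of the diameters `[x, y]` with `y - x ∈ C j` form a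
compact set containing no diameter, i.e. of diameter `< D`. Thickening these `n` sets slightly,
and adding to each the points of `K` that stay away from all diameters, gives the pieces.
-/

open RealInnerProductSpace

/-- The width of a set `K` in the direction of a vector `u`. -/
noncomputable def setWidth {n : ℕ} (K : Set (EuclideanSpace ℝ (Fin n)))
    (u : EuclideanSpace ℝ (Fin n)) : ℝ :=
  sSup ((fun x => ⟪x, u⟫) '' K) - sInf ((fun x => ⟪x, u⟫) '' K)

open Metric Set

section MetricSpace

variable {α : Type*} [MetricSpace α] {K : Set α}

theorem IsCompact.exists_dist_eq_diam (hK : IsCompact K) (hne : K.Nonempty) :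
    ∃ x ∈ K, ∃ y ∈ K, dist x y = diam K := by
  obtain ⟨p, hp, hmax⟩ := (hK.prod hK).exists_isMaxOn (hne.prod hne) continuous_dist.continuousOn
  refine ⟨p.1, hp.1, p.2, hp.2, le_antisymm (dist_le_diam_of_mem hK.isBounded hp.1 hp.2) ?_⟩
  exact diam_le_of_forall_dist_le dist_nonneg fun x hx y hy => hmax (mk_mem_prod hx hy)

theorem IsCompact.diam_lt_of_forall_dist_lt (hK : IsCompact K) {r : ℝ} (hr : 0 < r)
    (h : ∀ x ∈ K, ∀ y ∈ K, dist x y < r) : diam K < r := by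
  rcases K.eq_empty_or_nonempty with rfl | hne
  · rwa [diam_empty]
  obtain ⟨x, hx, y, hy, hxy⟩ := hK.exists_dist_eq_diam hne
  exact hxy ▸ h x hx y hy

def diametralPoints (K : Set α) : Set α :=
  {y ∈ K | ∃ x ∈ K, dist x y = diam K}

theorem IsCompact.diametralPoints_nonempty (hK : IsCompact K) (hne : K.Nonempty) :
    (diametralPoints K).Nonempty := by
  obtain ⟨x, hx, y, hy, hxy⟩ := hK.exists_dist_eq_diam hne
  exact ⟨y, hy, x, hx, hxy⟩

theorem IsCompact.exists_iUnion_eq_diam_lt {ι : Type*} [Finite ι] [Nonempty ι]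
    (hK : IsCompact K) (G : ι → Set α) (hGK : ∀ j, G j ⊆ K) (hG : ∀ j, diam (G j) < diam K)
    (hcover : diametralPoints K ⊆ ⋃ j, G j) :
    ∃ X : ι → Set α, K = ⋃ j, X j ∧ ∀ j, diam (X j) < diam K := by
  obtain ⟨j₀, hj₀⟩ := Finite.exists_max fun j => diam (G j)
  obtain ⟨ε, hε_pos, hε⟩ : ∃ ε, 0 < ε ∧ diam (G j₀) + 2 * ε < diam K :=
    ⟨(diam K - diam (G j₀)) / 3, by linarith [hG j₀], by linarith [hG j₀]⟩
  set X : ι → Set α := fun j =>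
    K ∩ (cthickening ε (G j) ∪ {z | ε ≤ infDist z (diametralPoints K)})
  refine ⟨X, Subset.antisymm (fun z hz => ?_) (iUnion_subset fun j => inter_subset_left),
    fun j => ?_⟩
  · rcases le_or_gt ε (infDist z (diametralPoints K)) with hfar | hnear
    · exact mem_iUnion.2 ⟨j₀, hz, Or.inr hfar⟩
    obtain ⟨y, hy, hzy⟩ := (infDist_lt_iff (hK.diametralPoints_nonempty ⟨z, hz⟩)).1 hnear
    obtain ⟨j, hj⟩ := mem_iUnion.1 (hcover hy)
    exact mem_iUnion.2 ⟨j, hz, Or.inl (mem_cthickening_of_dist_le z y ε _ hj hzy.le)⟩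
  have hXc : IsCompact (X j) := hK.inter_right <| isClosed_cthickening.union <|
    isClosed_le continuous_const (continuous_infDist_pt _)
  have hdiam_pos : 0 < diam K := diam_nonneg.trans_lt (hG j)
  refine hXc.diam_lt_of_forall_dist_lt hdiam_pos fun z hz w hw => ?_
  by_contra! hzw
  have hzw : dist z w = diam K := le_antisymm (dist_le_diam_of_mem hK.isBounded hz.1 hw.1) hzw
  have near : ∀ y ∈ X j, y ∈ diametralPoints K → y ∈ cthickening ε (G j) := by
    rintro y ⟨-, hy | hy⟩ hyY
    · exact hy
    · have : ε ≤ 0 := infDist_zero_of_mem hyY ▸ hy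
      linarith
  have hzG := near z hz ⟨hz.1, w, hw.1, dist_comm z w ▸ hzw⟩
  have hwG := near w hw ⟨hw.1, z, hz.1, hzw⟩
  have := calc
    diam K = dist z w := hzw.symm
    _ ≤ diam (cthickening ε (G j)) :=
      dist_le_diam_of_mem ((hK.isBounded.subset (hGK j)).cthickening) hzG hwG
    _ ≤ diam (G j) + 2 * ε := diam_cthickening_le _ hε_pos.le
    _ ≤ diam (G j₀) + 2 * ε := by gcongr; exact hj₀ j
  linarith

end MetricSpace

section NormedAddCommGroup

variable {E : Type*} [NormedAddCommGroup E] {K : Set E}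

def diametralPointsAlong (K C : Set E) : Set E :=
  {y ∈ K | ∃ x ∈ K, dist x y = diam K ∧ y - x ∈ C}

theorem isCompact_diametralPointsAlong (hK : IsCompact K) {C : Set E} (hC : IsClosed C) :
    IsCompact (diametralPointsAlong K C) := by
  have : diametralPointsAlong K C =
      Prod.snd '' ((K ×ˢ K) ∩ {p | dist p.1 p.2 = diam K ∧ p.2 - p.1 ∈ C}) := by
    ext y
    simp only [diametralPointsAlong, mem_image, mem_inter_iff, mem_prod, Prod.exists]
    constructor
    · rintro ⟨hy, x, hx, hxy, hC⟩
      exact ⟨x, y, ⟨⟨hx, hy⟩, hxy, hC⟩, rfl⟩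
    · rintro ⟨x, y, ⟨⟨hx, hy⟩, hxy, hC⟩, rfl⟩
      exact ⟨hy, x, hx, hxy, hC⟩
  rw [this]
  refine ((hK.prod hK).inter_right ?_).image continuous_snd
  exact (isClosed_eq (by fun_prop) continuous_const).inter
    (hC.preimage (by fun_prop))

section InnerProductSpace

variable [InnerProductSpace ℝ E]

theorem inner_le_inner_of_dist_eq_diam (hK : Bornology.IsBounded K) {x y z : E} (hx : x ∈ K)
    (hxy : dist x y = diam K) (hz : z ∈ K) : ⟪z, y - x⟫ ≤ ⟪y, y - x⟫ := by
  have hzx : ‖z - x‖ ≤ ‖y - x‖ := by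
    rw [← dist_eq_norm, ← dist_eq_norm, dist_comm y, hxy]
    exact dist_le_diam_of_mem hK hz hx
  have hexpand : ‖z - x‖ ^ 2 = ‖z - y‖ ^ 2 + 2 * ⟪z - y, y - x⟫ + ‖y - x‖ ^ 2 := by
    rw [← norm_add_sq_real, sub_add_sub_cancel]
  have : ⟪z - y, y - x⟫ ≤ 0 := by nlinarith [norm_nonneg (z - x), sq_nonneg ‖z - y‖]
  rwa [inner_sub_left, sub_nonpos] at this

theorem mem_frontier_of_forall_inner_le {y u : E} (hy : y ∈ K) (hu : u ≠ 0)
    (h : ∀ z ∈ K, ⟪z, u⟫ ≤ ⟪y, u⟫) : y ∈ frontier K := by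
  refine ⟨subset_closure hy, fun hint => ?_⟩
  have hpath : Filter.Tendsto (fun t : ℝ => y + t • u) (nhdsWithin 0 (Ioi 0)) (nhds y) := by
    have : Continuous fun t : ℝ => y + t • u := by fun_prop
    simpa using (this.tendsto 0).mono_left nhdsWithin_le_nhds
  obtain ⟨t, ht, htK⟩ := (eventually_mem_nhdsWithin.and
    (hpath.eventually (mem_interior_iff_mem_nhds.1 hint))).exists
  have := h _ htK
  rw [inner_add_left, real_inner_smul_left, real_inner_self_eq_norm_sq] at this
  have := mul_pos (mem_Ioi.1 ht) (pow_pos (norm_pos_iff.2 hu) 2)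
  linarith

theorem eq_of_dist_eq_diam_of_uniqueNormal (hK : Bornology.IsBounded K)
    (hsmooth : ∀ x ∈ frontier K, ∃! u : E, ‖u‖ = 1 ∧ ∀ y ∈ K, ⟪y, u⟫ ≤ ⟪x, u⟫)
    {x w z : E} (hx : x ∈ K) (hw : w ∈ K) (hz : z ∈ K) (hxz : dist x z = diam K)
    (hwz : dist w z = diam K) : x = w := by
  rcases eq_or_ne (diam K) 0 with hD | hD
  · rw [hD, dist_eq_zero] at hxz hwz
    rw [hxz, hwz]
  have normal : ∀ p ∈ K, dist p z = diam K →
      ‖z - p‖ = diam K ∧ ‖(‖z - p‖⁻¹ : ℝ) • (z - p)‖ = 1 ∧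
        ∀ y ∈ K, ⟪y, (‖z - p‖⁻¹ : ℝ) • (z - p)⟫ ≤ ⟪z, (‖z - p‖⁻¹ : ℝ) • (z - p)⟫ := by
    intro p hp hpz
    have hnorm : ‖z - p‖ = diam K := by rw [← dist_eq_norm, dist_comm, hpz]
    have hne : z - p ≠ 0 := norm_ne_zero_iff.1 (hnorm ▸ hD)
    refine ⟨hnorm, norm_smul_inv_norm hne, fun y hy => ?_⟩
    simp only [real_inner_smul_right]
    exact mul_le_mul_of_nonneg_left (inner_le_inner_of_dist_eq_diam hK hp hpz hy)
      (inv_nonneg.2 (norm_nonneg _))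
  obtain ⟨hx₁, hx₂, hx₃⟩ := normal x hx hxz
  obtain ⟨hw₁, hw₂, hw₃⟩ := normal w hw hwz
  have hfront : z ∈ frontier K :=
    mem_frontier_of_forall_inner_le hz (norm_ne_zero_iff.1 (hx₂.trans_ne one_ne_zero)) hx₃
  have := (hsmooth z hfront).unique ⟨hx₂, hx₃⟩ ⟨hw₂, hw₃⟩
  rw [hx₁, hw₁] at this
  simpa using smul_right_injective E (inv_ne_zero hD) this

theorem dist_lt_diam_of_mem_diametralPointsAlong (hK : Bornology.IsBounded K)
    (hsmooth : ∀ x ∈ frontier K, ∃! u : E, ‖u‖ = 1 ∧ ∀ y ∈ K, ⟪y, u⟫ ≤ ⟪x, u⟫)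
    {C : Set E} (hC : ∀ x ∈ K, ∀ y ∈ K, dist x y = diam K → y - x ∈ C → x - y ∉ C)
    {z w : E} (hz : z ∈ diametralPointsAlong K C) (hw : w ∈ diametralPointsAlong K C) :
    dist z w < diam K := by
  obtain ⟨hzK, x, hx, hxz, hxzC⟩ := hz
  obtain ⟨hwK, y, hy, hyw, hywC⟩ := hw
  refine (dist_le_diam_of_mem hK hzK hwK).lt_of_ne fun hzw => ?_
  have hxw : x = w := eq_of_dist_eq_diam_of_uniqueNormal hK hsmooth hx hwK hzK hxz
    (dist_comm w z ▸ hzw)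
  have hyz : y = z := eq_of_dist_eq_diam_of_uniqueNormal hK hsmooth hy hzK hwK hyw hzw
  rw [hxw] at hxzC
  rw [hyz] at hywC
  exact hC w hwK z hzK (dist_comm w z ▸ hzw) hxzC hywC

end InnerProductSpace

end NormedAddCommGroup

section EuclideanSpace

variable {n : ℕ} {K : Set (EuclideanSpace ℝ (Fin n))}

theorem inner_sub_le_setWidth (hK : IsCompact K) {x y : EuclideanSpace ℝ (Fin n)} (hx : x ∈ K)
    (hy : y ∈ K) (u : EuclideanSpace ℝ (Fin n)) : ⟪y - x, u⟫ ≤ setWidth K u := by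
  have hc : IsCompact ((fun z => ⟪z, u⟫) '' K) := hK.image (by fun_prop)
  have hsup : ⟪y, u⟫ ≤ sSup ((fun z => ⟪z, u⟫) '' K) := le_csSup hc.bddAbove ⟨y, hy, rfl⟩
  have hinf : sInf ((fun z => ⟪z, u⟫) '' K) ≤ ⟪x, u⟫ := csInf_le hc.bddBelow ⟨x, hx, rfl⟩
  rw [inner_sub_left, setWidth]
  linarith

theorem setWidth_nonneg (hK : IsCompact K) (u : EuclideanSpace ℝ (Fin n)) :
    0 ≤ setWidth K u := by
  rcases K.eq_empty_or_nonempty with rfl | ⟨x, hx⟩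
  · simp [setWidth]
  · simpa using inner_sub_le_setWidth hK hx hx u

theorem setWidth_le_diam (hK : IsCompact K) {u : EuclideanSpace ℝ (Fin n)} (hu : ‖u‖ = 1) :
    setWidth K u ≤ diam K := by
  rcases K.eq_empty_or_nonempty with rfl | hne
  · simp [setWidth]
  have hc : IsCompact ((fun z => ⟪z, u⟫) '' K) := hK.image (by fun_prop)
  obtain ⟨y, hy, hsup⟩ := hc.sSup_mem (hne.image _)
  obtain ⟨x, hx, hinf⟩ := hc.sInf_mem (hne.image _)
  calc setWidth K u = ⟪y - x, u⟫ := by rw [setWidth, ← hsup, ← hinf, inner_sub_left]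
    _ ≤ ‖y - x‖ * ‖u‖ := real_inner_le_norm _ _
    _ = dist y x := by rw [hu, mul_one, dist_eq_norm]
    _ ≤ diam K := dist_le_diam_of_mem hK.isBounded hy hx

theorem exists_setWidth_lt_diam (hK : IsCompact K)
    (h : ∃ u v : EuclideanSpace ℝ (Fin n), ‖u‖ = 1 ∧ ‖v‖ = 1 ∧ setWidth K u ≠ setWidth K v) :
    ∃ v : EuclideanSpace ℝ (Fin n), ‖v‖ = 1 ∧ setWidth K v < diam K := by
  obtain ⟨u, v, hu, hv, huv⟩ := h
  rcases huv.lt_or_gt with huv | huv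
  · exact ⟨u, hu, huv.trans_le (setWidth_le_diam hK hv)⟩
  · exact ⟨v, hv, huv.trans_le (setWidth_le_diam hK hu)⟩

theorem dist_le_setWidth_of_sub_eq_smul (hK : IsCompact K) {v x y : EuclideanSpace ℝ (Fin n)}
    (hv : ‖v‖ = 1) (hx : x ∈ K) (hy : y ∈ K) {t : ℝ} (h : y - x = t • v) :
    dist x y ≤ setWidth K v := by
  have hinner : ⟪y - x, v⟫ = t := by
    rw [h, real_inner_smul_left, real_inner_self_eq_norm_sq, hv, one_pow, mul_one]
  have hdist : dist x y = |t| := by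
    rw [dist_comm, dist_eq_norm, h, norm_smul, hv, mul_one, Real.norm_eq_abs]
  have hle := inner_sub_le_setWidth hK hx hy v
  have hge := inner_sub_le_setWidth hK hy hx v
  rw [← neg_sub, inner_neg_left] at hge
  rw [hdist, abs_le]
  constructor <;> linarith

/-- The projection of `± eₖ` onto `v^⊥`, with the sign of `v k`. For a unit vector `v` we have
`∑ₖ |v k| • signedProj v k = 0` with `∑ₖ |v k| > 0`, which is what rules out a nonzero vector of
`v^⊥` having the same inner product with all of them. -/
noncomputable def signedProj (v : EuclideanSpace ℝ (Fin n)) (k : Fin n) :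
    EuclideanSpace ℝ (Fin n) :=
  (if 0 ≤ v k then 1 else -1 : ℝ) • (EuclideanSpace.single k 1 - v k • v)

theorem inner_signedProj (u v : EuclideanSpace ℝ (Fin n)) (k : Fin n) :
    ⟪u, signedProj v k⟫ = (if 0 ≤ v k then 1 else -1 : ℝ) * (u k - v k * ⟪u, v⟫) := by
  rw [signedProj, real_inner_smul_right, inner_sub_right, real_inner_smul_right,
    EuclideanSpace.inner_single_right]
  simp

theorem exists_eq_smul_of_inner_signedProj_eq {u v : EuclideanSpace ℝ (Fin n)} (hv : ‖v‖ = 1)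
    {c : ℝ} (h : ∀ k, ⟪u, signedProj v k⟫ = c) : ∃ t : ℝ, u = t • v := by
  refine ⟨⟪u, v⟫, ?_⟩
  have hcoord : ∀ k, u k - v k * ⟪u, v⟫ = (if 0 ≤ v k then 1 else -1 : ℝ) * c := by
    intro k
    rw [← h k, inner_signedProj, ← mul_assoc]
    split_ifs <;> ring
  have hsum : ∑ k, v k * (u k - v k * ⟪u, v⟫) = c * ∑ k, |v k| := by
    rw [Finset.mul_sum]
    refine Finset.sum_congr rfl fun k _ => ?_
    rw [hcoord]
    split_ifs with hk
    · rw [abs_of_nonneg hk]; ring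
    · rw [abs_of_neg (not_le.1 hk)]; ring
  have horth : ∑ k, v k * (u k - v k * ⟪u, v⟫) = 0 := by
    have : ⟪u - ⟪u, v⟫ • v, v⟫ = 0 := by
      rw [inner_sub_left, real_inner_smul_left, real_inner_self_eq_norm_sq, hv, one_pow,
        mul_one, sub_self]
    simpa [PiLp.inner_apply, mul_comm] using this
  have hpos : 0 < ∑ k, |v k| := by
    obtain ⟨k, hk⟩ : ∃ k, v k ≠ 0 := by
      by_contra! h0
      simp [show v = 0 from PiLp.ext h0] at hv
    exact Finset.sum_pos' (fun k _ => abs_nonneg _) ⟨k, Finset.mem_univ k, abs_pos.2 hk⟩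
  have hc : c = 0 := by
    rw [horth] at hsum
    exact (mul_eq_zero.1 hsum.symm).resolve_right hpos.ne'
  ext k
  have := hcoord k
  rw [hc, mul_zero, sub_eq_zero] at this
  simp [this, mul_comm]

def signedProjCone (v : EuclideanSpace ℝ (Fin n)) (j : Fin n) : Set (EuclideanSpace ℝ (Fin n)) :=
  {u | ∀ k, ⟪u, signedProj v k⟫ ≤ ⟪u, signedProj v j⟫}

theorem isClosed_signedProjCone (v : EuclideanSpace ℝ (Fin n)) (j : Fin n) :
    IsClosed (signedProjCone v j) := by
  simp only [signedProjCone, ofPred_forall]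
  exact isClosed_iInter fun k => isClosed_le (by fun_prop) (by fun_prop)

theorem exists_mem_signedProjCone [Nonempty (Fin n)] (v u : EuclideanSpace ℝ (Fin n)) :
    ∃ j, u ∈ signedProjCone v j :=
  Finite.exists_max fun k => ⟪u, signedProj v k⟫

theorem exists_eq_smul_of_mem_signedProjCone {u v : EuclideanSpace ℝ (Fin n)} (hv : ‖v‖ = 1)
    {j : Fin n} (hu : u ∈ signedProjCone v j) (hnu : -u ∈ signedProjCone v j) :
    ∃ t : ℝ, u = t • v := by
  refine exists_eq_smul_of_inner_signedProj_eq hv (c := ⟪u, signedProj v j⟫) fun k =>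
    le_antisymm (hu k) ?_
  simpa only [inner_neg_left, neg_le_neg_iff] using hnu k

end EuclideanSpace

theorem smooth_nonconstant_width_borsuk_general (n : ℕ)
    (K : Set (EuclideanSpace ℝ (Fin n)))
    (hKc : IsCompact K)
    (hsmooth : ∀ x ∈ frontier K,
      ∃! u : EuclideanSpace ℝ (Fin n), ‖u‖ = 1 ∧ ∀ y ∈ K, ⟪y, u⟫ ≤ ⟪x, u⟫)
    (hnotcw : ∃ u v : EuclideanSpace ℝ (Fin n),
      ‖u‖ = 1 ∧ ‖v‖ = 1 ∧ setWidth K u ≠ setWidth K v) :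
    ∃ X : Fin n → Set (EuclideanSpace ℝ (Fin n)),
      K = ⋃ i, X i ∧ ∀ i, Metric.diam (X i) < Metric.diam K := by
  obtain ⟨v, hv, hvK⟩ := exists_setWidth_lt_diam hKc hnotcw
  have : Nonempty (Fin n) := by
    by_contra! h
    simp [Subsingleton.elim v 0] at hv
  refine hKc.exists_iUnion_eq_diam_lt (fun j => diametralPointsAlong K (signedProjCone v j))
    (fun j y hy => hy.1) (fun j => ?_) fun y ⟨hy, x, hx, hxy⟩ => ?_
  · have hGc := isCompact_diametralPointsAlong hKc (isClosed_signedProjCone v j)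
    refine hGc.diam_lt_of_forall_dist_lt ((setWidth_nonneg hKc v).trans_lt hvK) fun z hz w hw =>
      dist_lt_diam_of_mem_diametralPointsAlong hKc.isBounded hsmooth ?_ hz hw
    -- a diameter along `± v` would be at most as long as the width in direction `v`
    intro x hx y hy hxy hyxC hxyC
    obtain ⟨t, ht⟩ := exists_eq_smul_of_mem_signedProjCone hv hyxC (by rw [neg_sub]; exact hxyC)
    linarith [dist_le_setWidth_of_sub_eq_smul hKc hv hx hy ht]
  · obtain ⟨j, hj⟩ := exists_mem_signedProjCone v (y - x)
    exact mem_iUnion.2 ⟨j, hy, x, hx, hxy, hj⟩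

/-- Lenz: a smooth n-dimensional convex body which is not of constant width can be
written as a union of n subsets, each of diameter strictly smaller than the
diameter of the body. -/
theorem smooth_nonconstant_width_borsuk (n : ℕ)
    (K : Set (EuclideanSpace ℝ (Fin n)))
    (hKc : IsCompact K) (hKconv : Convex ℝ K) (hKint : (interior K).Nonempty)
    (hsmooth : ∀ x ∈ frontier K,
      ∃! u : EuclideanSpace ℝ (Fin n), ‖u‖ = 1 ∧ ∀ y ∈ K, ⟪y, u⟫ ≤ ⟪x, u⟫)
    (hnotcw : ∃ u v : EuclideanSpace ℝ (Fin n),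
      ‖u‖ = 1 ∧ ‖v‖ = 1 ∧ setWidth K u ≠ setWidth K v) :
    ∃ X : Fin n → Set (EuclideanSpace ℝ (Fin n)),
      K = ⋃ i, X i ∧ ∀ i, Metric.diam (X i) < Metric.diam K :=
  smooth_nonconstant_width_borsuk_general n K hKc hsmooth hnotcw
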